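/- For ω ∈ ℝ, the bicomplex Laplace transform of f(t) = cos(ωt) equals ξ(ξ² + ω²)⁻¹ for all ξ = ξ₁e₁ + ξ₂e₂ with Re(ξ₁) > 0, Re(ξ₂) > 0 and ξ² + ω² invertible. -/

import Mathlib

open MeasureTheory Set

noncomputable section

/-- Bicomplex numbers, modeled in idempotent coordinates as pairs `(ξ₁, ξ₂)` of
complex numbers (multiplication on `ℂ × ℂ` is componentwise, which is exactly
bicomplex multiplication in idempotent coordinates). -/
abbrev C2 := ℂ × ℂ

namespace C2

/-- The imaginary unit `i₁` of the bicomplex numbers. -/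
def i1 : C2 := (Complex.I, Complex.I)

/-- The imaginary unit `i₂` of the bicomplex numbers. -/
def i2 : C2 := (-Complex.I, Complex.I)

/-- The idempotent `e₁ = (1 + i₁i₂)/2`. -/
def e1 : C2 := (1 + i1 * i2) / 2

/-- The idempotent `e₂ = (1 - i₁i₂)/2`. -/
def e2 : C2 := (1 - i1 * i2) / 2

/-- Embedding of `ℂ` (the `i₁`-copy of the complex numbers) into `C2`. -/
def oc (z : ℂ) : C2 := (z, z)

/-- The bicomplex number `z₁ + i₂ z₂`. -/
def bmk (z₁ z₂ : ℂ) : C2 := oc z₁ + oc z₂ * i2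

/-- First idempotent projection. -/
def P1 (ξ : C2) : ℂ := ξ.1

/-- Second idempotent projection. -/
def P2 (ξ : C2) : ℂ := ξ.2

/-- First cartesian component: `z₁` in `ξ = z₁ + i₂ z₂`. -/
def z1 (ξ : C2) : ℂ := (ξ.1 + ξ.2) / 2

/-- Second cartesian component: `z₂` in `ξ = z₁ + i₂ z₂`. -/
def z2 (ξ : C2) : ℂ := Complex.I * (ξ.1 - ξ.2) / 2

/-- The bicomplex (Euclidean) norm `‖z₁ + i₂ z₂‖ = √(|z₁|² + |z₂|²)`. -/
def bnorm (ξ : C2) : ℝ := Real.sqrt (‖z1 ξ‖ ^ 2 + ‖z2 ξ‖ ^ 2)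

/-- The bicomplex exponential (computed via idempotent components). -/
def bexp (ξ : C2) : C2 := (Complex.exp ξ.1, Complex.exp ξ.2)

/-- The bicomplex Laplace transform `F(ξ) = ∫₀^∞ f(t) e^{-ξt} dt`. -/
def laplace (f : ℝ → ℝ) (ξ : C2) : C2 := ∫ t in Set.Ici (0 : ℝ), f t • bexp (-(t • ξ))

end C2

open C2

/-! In idempotent coordinates `ξ = (ξ₁, ξ₂)` the bicomplex Laplace transform is the pair of
complex Laplace transforms at `ξ₁` and `ξ₂`. Each is computed by writing
`cos (ω t) = (e^{iωt} + e^{-iωt}) / 2`, which gives `((ξ - iω)⁻¹ + (ξ + iω)⁻¹) / 2 = ξ / (ξ² + ω²)`. -/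

open Complex in
theorem cos_smul_exp_neg_mul (ω t : ℝ) (ξ : ℂ) :
    Real.cos (ω * t) • exp (-(t * ξ)) =
      (exp ((I * ω - ξ) * t) + exp ((-(I * ω) - ξ) * t)) / 2 := by
  rw [real_smul, ofReal_cos, cos, div_mul_eq_mul_div, add_mul, ← exp_add, ← exp_add]
  push_cast
  ring_nf

theorem integrableOn_cos_smul_exp_neg_mul (ω : ℝ) {ξ : ℂ} (hξ : 0 < ξ.re) :
    IntegrableOn (fun t : ℝ => Real.cos (ω * t) • Complex.exp (-(t * ξ))) (Ici 0) := by
  rw [integrableOn_Ici_iff_integrableOn_Ioi]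
  simp only [cos_smul_exp_neg_mul]
  exact ((integrableOn_exp_mul_complex_Ioi (by simpa) 0).add
    (integrableOn_exp_mul_complex_Ioi (by simpa) 0)).div_const 2

theorem integral_cos_smul_exp_neg_mul (ω : ℝ) {ξ : ℂ} (hξ : 0 < ξ.re) :
    ∫ t in Ici (0 : ℝ), Real.cos (ω * t) • Complex.exp (-(t * ξ)) =
      ξ * (ξ ^ 2 + (ω : ℂ) ^ 2)⁻¹ := by
  have hminus : (Complex.I * ω - ξ).re < 0 := by simpa
  have hplus : (-(Complex.I * ω) - ξ).re < 0 := by simpa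
  have hminus_ne : Complex.I * ω - ξ ≠ 0 := fun h => by simp [h] at hminus
  have hplus_ne : -(Complex.I * ω) - ξ ≠ 0 := fun h => by simp [h] at hplus
  have hsq : ξ ^ 2 + (ω : ℂ) ^ 2 ≠ 0 := by
    have hfac : ξ ^ 2 + (ω : ℂ) ^ 2 = (Complex.I * ω - ξ) * (-(Complex.I * ω) - ξ) := by
      linear_combination (ω : ℂ) ^ 2 * Complex.I_sq
    rw [hfac]
    exact mul_ne_zero hminus_ne hplus_ne
  rw [integral_Ici_eq_integral_Ioi]
  simp only [cos_smul_exp_neg_mul]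
  rw [integral_div, integral_add (integrableOn_exp_mul_complex_Ioi hminus 0)
    (integrableOn_exp_mul_complex_Ioi hplus 0), integral_exp_mul_complex_Ioi hminus,
    integral_exp_mul_complex_Ioi hplus]
  simp only [Complex.ofReal_zero, mul_zero, Complex.exp_zero]
  field_simp
  linear_combination 2 * (ω : ℂ) ^ 2 * ξ * Complex.I_sq

namespace C2

theorem oc_mul_e1_add_oc_mul_e2 (a b : ℂ) : oc a * e1 + oc b * e2 = (a, b) := by
  ext <;> simp [oc, e1, e2, i1, i2]

theorem laplace_mk (f : ℝ → ℝ) {a b : ℂ}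
    (ha : IntegrableOn (fun t : ℝ => f t • Complex.exp (-(t * a))) (Ici 0))
    (hb : IntegrableOn (fun t : ℝ => f t • Complex.exp (-(t * b))) (Ici 0)) :
    laplace f (a, b) =
      (∫ t in Ici (0 : ℝ), f t • Complex.exp (-(t * a)),
        ∫ t in Ici (0 : ℝ), f t • Complex.exp (-(t * b))) := by
  rw [laplace, ← integral_pair ha hb]
  rfl

end C2

theorem stmt15_general (ω : ℝ) (ξ₁ ξ₂ : ℂ) (h1 : 0 < ξ₁.re) (h2 : 0 < ξ₂.re) :
    laplace (fun t => Real.cos (ω * t)) (oc ξ₁ * e1 + oc ξ₂ * e2) =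
      (oc ξ₁ * e1 + oc ξ₂ * e2) * ((oc ξ₁ * e1 + oc ξ₂ * e2) ^ 2 + oc (ω : ℂ) ^ 2)⁻¹ := by
  rw [oc_mul_e1_add_oc_mul_e2, laplace_mk _ (integrableOn_cos_smul_exp_neg_mul ω h1)
    (integrableOn_cos_smul_exp_neg_mul ω h2), integral_cos_smul_exp_neg_mul ω h1,
    integral_cos_smul_exp_neg_mul ω h2]
  rfl

theorem stmt15 (ω : ℝ) (ξ₁ ξ₂ : ℂ) (h1 : 0 < ξ₁.re) (h2 : 0 < ξ₂.re)
    (hu : IsUnit ((oc ξ₁ * e1 + oc ξ₂ * e2) ^ 2 + oc (ω : ℂ) ^ 2)) :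
    laplace (fun t => Real.cos (ω * t)) (oc ξ₁ * e1 + oc ξ₂ * e2) =
      (oc ξ₁ * e1 + oc ξ₂ * e2) * ((oc ξ₁ * e1 + oc ξ₂ * e2) ^ 2 + oc (ω : ℂ) ^ 2)⁻¹ :=
  stmt15_general ω ξ₁ ξ₂ h1 h2
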